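/- arXiv:1102.3956 — 3 statements merged into one kernel-verified Lean document; each statement's English description precedes it below -/
import Mathlib

section
/- The series ∑_{k ≥ 0} (1 - exp(-p·(c/(x + k^γ))^α)) converges for every x > 0, and tends to 0 as x → ∞. -/
/-!
Since `0 ≤ 1 - exp (-t) ≤ t`, the `k`-th term is at most `p c^α k^(-αγ)`, which is summable
because `αγ > 1`. Each term decreases in `x` and tends to `0` as `x → ∞`, so the series at `x = 1`
dominates the series for `x ≥ 1` and Tannery's theorem gives the limit `0`.
-/

open Filter Topology Real

lemma Real.one_sub_exp_neg_nonneg {t : ℝ} (ht : 0 ≤ t) : 0 ≤ 1 - exp (-t) :=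
  sub_nonneg.2 <| exp_le_one_iff.2 <| neg_nonpos.2 ht

lemma Summable.one_sub_exp_neg {ι : Type*} {u : ι → ℝ} (hu : 0 ≤ u) (h : Summable u) :
    Summable fun i => 1 - exp (-u i) :=
  h.of_nonneg_of_le (fun i => one_sub_exp_neg_nonneg (hu i))
    fun i => by linarith [one_sub_le_exp_neg (u i)]

lemma summable_div_add_rpow_rpow {x c α γ : ℝ} (hx : 0 ≤ x) (hc : 0 ≤ c) (hα : 0 ≤ α)
    (hαγ : 1 < α * γ) : Summable fun k : ℕ => (c / (x + (k : ℝ) ^ γ)) ^ α := by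
  refine .of_norm_bounded_eventually_nat
    ((Real.summable_nat_rpow_inv.2 hαγ).mul_left (c ^ α)) ?_
  filter_upwards [eventually_ge_atTop 1] with k hk
  have hk : (0 : ℝ) < k := by exact_mod_cast hk
  calc ‖(c / (x + (k : ℝ) ^ γ)) ^ α‖ = (c / (x + (k : ℝ) ^ γ)) ^ α :=
        norm_of_nonneg (by positivity)
    _ ≤ (c / (k : ℝ) ^ γ) ^ α := by gcongr; linarith
    _ = c ^ α * ((k : ℝ) ^ (α * γ))⁻¹ := by
        rw [div_rpow hc (by positivity), ← rpow_mul hk.le, mul_comm γ, div_eq_mul_inv]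

lemma antitoneOn_one_sub_exp_neg_mul_div_add_rpow {p c α b : ℝ} (hp : 0 ≤ p) (hc : 0 ≤ c)
    (hα : 0 ≤ α) (hb : 0 ≤ b) :
    AntitoneOn (fun x : ℝ => 1 - exp (-(p * (c / (x + b)) ^ α))) (Set.Ioi 0) := by
  intro x (hx : 0 < x) y (hy : 0 < y) hxy
  dsimp only
  gcongr

lemma tendsto_one_sub_exp_neg_mul_div_add_rpow {p c α : ℝ} (hα : 0 < α) (b : ℝ) :
    Tendsto (fun x : ℝ => 1 - exp (-(p * (c / (x + b)) ^ α))) atTop (𝓝 0) := by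
  have h : Tendsto (fun x : ℝ => c / (x + b)) atTop (𝓝 0) :=
    tendsto_const_nhds.div_atTop (tendsto_atTop_add_const_right _ _ tendsto_id)
  simpa [zero_rpow hα.ne'] using
    (((h.rpow_const (.inr hα.le)).const_mul p).neg.rexp).const_sub 1

theorem series_convergent_and_tendsto_zero_general
    (p c α γ : ℝ) (hp : 0 < p) (hc : 0 < c) (hα1 : 1 < α) (hαγ : 1 < α * γ) :
    (∀ x : ℝ, 0 < x →
        Summable (fun k : ℕ => 1 - Real.exp (-(p * (c / (x + (k : ℝ) ^ γ)) ^ α)))) ∧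
      Tendsto (fun x : ℝ => ∑' k : ℕ, (1 - Real.exp (-(p * (c / (x + (k : ℝ) ^ γ)) ^ α))))
        atTop (𝓝 0) := by
  have hα : 0 < α := by linarith
  have hsum (x : ℝ) (hx : 0 < x) :
      Summable fun k : ℕ => 1 - exp (-(p * (c / (x + (k : ℝ) ^ γ)) ^ α)) :=
    ((summable_div_add_rpow_rpow hx.le hc.le hα.le hαγ).mul_left p).one_sub_exp_neg
      fun k => by positivity
  refine ⟨hsum, ?_⟩
  have h_dom : ∀ᶠ x in atTop, ∀ k : ℕ,
      ‖1 - exp (-(p * (c / (x + (k : ℝ) ^ γ)) ^ α))‖ ≤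
        1 - exp (-(p * (c / (1 + (k : ℝ) ^ γ)) ^ α)) := by
    filter_upwards [eventually_ge_atTop 1] with x hx k
    have hx0 : (0 : ℝ) < x := by linarith
    rw [norm_of_nonneg (one_sub_exp_neg_nonneg (by positivity))]
    exact antitoneOn_one_sub_exp_neg_mul_div_add_rpow hp.le hc.le hα.le (by positivity)
      (Set.mem_Ioi.2 one_pos) hx0 hx
  simpa using tendsto_tsum_of_dominated_convergence (hsum 1 one_pos)
    (fun k => tendsto_one_sub_exp_neg_mul_div_add_rpow hα _) h_dom

/-- For `p, c > 0`, `α ∈ (1,2)`, `γ ∈ (0,1)` with `αγ > 1`, the series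
`∑_{k ≥ 0} (1 - exp(-p (c/(x + k^γ))^α))` converges for every `x > 0`, and the sum
tends to `0` as `x → ∞`. -/
theorem series_convergent_and_tendsto_zero
    (p c α γ : ℝ) (hp : 0 < p) (hc : 0 < c) (hα1 : 1 < α) (hα2 : α < 2)
    (hγ0 : 0 < γ) (hγ1 : γ < 1) (hαγ : 1 < α * γ) :
    (∀ x : ℝ, 0 < x →
        Summable (fun k : ℕ => 1 - Real.exp (-(p * (c / (x + (k : ℝ) ^ γ)) ^ α)))) ∧
      Tendsto (fun x : ℝ => ∑' k : ℕ, (1 - Real.exp (-(p * (c / (x + (k : ℝ) ^ γ)) ^ α))))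
        atTop (𝓝 0) :=
  series_convergent_and_tendsto_zero_general p c α γ hp hc hα1 hαγ
end

section
/- If N_+ = ∑_i δ_{(t_i, x_i)} is a Poisson point process on [0,∞) × (0,∞) with intensity measure λ ⊗ ν_+, where λ is Lebesgue measure and ν_+ has density p·α·x^{-α-1} on (0,∞), and the random variables M_k = sup{c·x_i - k^γ : t_i ∈ [k, k+1)} satisfy P(M_k > x) = 1 - exp(-p·((x + k^γ)/c)^{-α}), then if αγ > 1 the random variable sup_{i ≥ 1} (c·x_i - t_i^γ) is almost surely finite. -/
open MeasureTheory Filter Topology Set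

/-!
Split the time axis into the strips `[k, k + 1)`. If the sequence `c x_i - t_i ^ γ` is unbounded,
then for every level `y` some strip `k` carries a point with `c x_i - k ^ γ > y`, so by the union
bound and `1 - e^{-u} ≤ u` the probability of unboundedness is at most
`∑ₖ p (c / (y + k ^ γ)) ^ α` for every `y`. Since `αγ > 1` these series are dominated by the
convergent `∑ₖ p (c / (1 + k ^ γ)) ^ α`, so they tend to `0` as `y → ∞`.
-/

lemma one_sub_ofReal_exp_neg_le_ofReal {u : ℝ} (hu : 0 ≤ u) :
    1 - ENNReal.ofReal (Real.exp (-u)) ≤ ENNReal.ofReal u := by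
  rw [tsub_le_iff_right, ← ENNReal.ofReal_add hu (Real.exp_nonneg _), ← ENNReal.ofReal_one]
  exact ENNReal.ofReal_le_ofReal (by linarith [Real.add_one_le_exp (-u)])

lemma measure_eq_zero_of_subset_iUnion_of_tendsto {ι Ω : Type*} [MeasurableSpace Ω]
    {μ : Measure Ω} {l : Filter ι} [l.NeBot] {S : Set Ω} {A : ι → ℕ → Set Ω} {b : ι → ENNReal}
    (hS : ∀ n, S ⊆ ⋃ k, A n k) (hA : ∀ᶠ n in l, ∑' k, μ (A n k) ≤ b n)
    (hb : Tendsto b l (𝓝 0)) : μ S = 0 :=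
  nonpos_iff_eq_zero.mp <| ge_of_tendsto hb <| hA.mono fun n hn ↦
    (measure_mono (hS n)).trans ((measure_iUnion_le _).trans hn)

lemma exists_mem_Ico_lt_sub_natCast_rpow_of_not_bddAbove {ι : Type*} {a t : ι → ℝ} {γ : ℝ}
    (ht : ∀ i, 0 ≤ t i) (hγ : 0 ≤ γ) (h : ¬BddAbove (range fun i ↦ a i - t i ^ γ)) (y : ℝ) :
    ∃ k : ℕ, ∃ i, t i ∈ Ico (k : ℝ) (k + 1) ∧ y < a i - (k : ℝ) ^ γ := by
  obtain ⟨_, ⟨i, rfl⟩, hy⟩ := not_bddAbove_iff.mp h y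
  have hk : (⌊t i⌋₊ : ℝ) ≤ t i := Nat.floor_le (ht i)
  exact ⟨⌊t i⌋₊, i, ⟨hk, Nat.lt_floor_add_one _⟩,
    hy.trans_le (sub_le_sub_left (Real.rpow_le_rpow (Nat.cast_nonneg _) hk hγ) _)⟩

section StripTail

variable {c α γ y : ℝ}

lemma div_add_natCast_rpow_rpow_le (hc : 0 ≤ c) (hα : 0 ≤ α) (hy : 1 ≤ y) (k : ℕ) :
    (c / (y + (k : ℝ) ^ γ)) ^ α ≤ (c / (1 + (k : ℝ) ^ γ)) ^ α := by
  have hk : 0 ≤ (k : ℝ) ^ γ := by positivity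
  gcongr

lemma summable_div_one_add_natCast_rpow_rpow (hc : 0 ≤ c) (hα : 0 < α) (hαγ : 1 < α * γ) :
    Summable fun k : ℕ ↦ (c / (1 + (k : ℝ) ^ γ)) ^ α := by
  refine .of_norm_bounded_eventually_nat
    ((Real.summable_nat_rpow.mpr (by linarith : -(α * γ) < -1)).mul_left (c ^ α)) ?_
  filter_upwards [eventually_ge_atTop 1] with k hk
  have hkγ : 0 < (k : ℝ) ^ γ := by positivity
  rw [Real.norm_of_nonneg (by positivity), mul_comm α γ, Real.rpow_neg (by positivity),
    Real.rpow_mul (by positivity), ← Real.inv_rpow hkγ.le, ← Real.mul_rpow hc (by positivity),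
    ← div_eq_mul_inv]
  gcongr
  linarith

lemma tendsto_tsum_div_add_natCast_rpow_rpow_atTop (hc : 0 ≤ c) (hα : 0 < α)
    (hαγ : 1 < α * γ) :
    Tendsto (fun y ↦ ∑' k : ℕ, (c / (y + (k : ℝ) ^ γ)) ^ α) atTop (𝓝 0) := by
  have hlim (k : ℕ) : Tendsto (fun y ↦ (c / (y + (k : ℝ) ^ γ)) ^ α) atTop (𝓝 0) := by
    have hdiv := (tendsto_const_nhds (x := c)).div_atTop
      (tendsto_atTop_add_const_right _ ((k : ℝ) ^ γ) tendsto_id)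
    simpa [Real.zero_rpow hα.ne'] using hdiv.rpow_const (p := α) (Or.inr hα.le)
  simpa using tendsto_tsum_of_dominated_convergence
    (summable_div_one_add_natCast_rpow_rpow hc hα hαγ) hlim <| by
      filter_upwards [eventually_ge_atTop 1] with y hy k
      have : 0 ≤ (k : ℝ) ^ γ := by positivity
      rw [Real.norm_of_nonneg (by positivity)]
      exact div_add_natCast_rpow_rpow_le hc hα.le hy k

end StripTail

theorem sup_points_minus_drift_as_finite_general
    (p c α γ : ℝ) (hp : 0 < p) (hc : 0 < c) (hα1 : 1 < α)
    (hγ0 : 0 < γ) (hαγ : 1 < α * γ)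
    {Ω : Type*} [MeasurableSpace Ω] (P : Measure Ω)
    (t x : ℕ → Ω → ℝ)
    (ht : ∀ i ω, 0 ≤ t i ω)
    (hTail : ∀ (k : ℕ) (y : ℝ), 0 < y →
      P {ω | ∃ i, t i ω ∈ Set.Ico (k : ℝ) (k + 1) ∧ y < c * x i ω - (k : ℝ) ^ γ}
        = 1 - ENNReal.ofReal (Real.exp (-(p * (c / (y + (k : ℝ) ^ γ)) ^ α)))) :
    ∀ᵐ ω ∂P, BddAbove (Set.range fun i : ℕ => c * x i ω - (t i ω) ^ γ) := by
  have hα : 0 < α := by linarith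
  rw [ae_iff]
  refine measure_eq_zero_of_subset_iUnion_of_tendsto (l := atTop)
    (A := fun y k ↦ {ω | ∃ i, t i ω ∈ Ico (k : ℝ) (k + 1) ∧ y < c * x i ω - (k : ℝ) ^ γ})
    (b := fun y ↦ ENNReal.ofReal (p * ∑' k : ℕ, (c / (y + (k : ℝ) ^ γ)) ^ α)) ?_ ?_ ?_
  · intro y ω hω
    simpa using exists_mem_Ico_lt_sub_natCast_rpow_of_not_bddAbove (ht · ω) hγ0.le hω y
  · filter_upwards [eventually_ge_atTop 1] with y hy
    have hsum := (summable_div_one_add_natCast_rpow_rpow hc.le hα hαγ).of_nonneg_of_le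
      (fun k ↦ by positivity) (div_add_natCast_rpow_rpow_le hc.le hα.le hy)
    rw [← tsum_mul_left, ENNReal.ofReal_tsum_of_nonneg (fun k ↦ by positivity) (hsum.mul_left p)]
    refine ENNReal.tsum_le_tsum fun k ↦ ?_
    rw [hTail k y (by linarith)]
    exact one_sub_ofReal_exp_neg_le_ofReal (by positivity)
  · simpa using ENNReal.tendsto_ofReal
      ((tendsto_tsum_div_add_natCast_rpow_rpow_atTop hc.le hα hαγ).const_mul p)

/-- Let `N_+ = ∑_i δ_{(t_i,x_i)}` be a Poisson point process whose
per-strip suprema `M_k = sup{c x_i - k^γ : t_i ∈ [k,k+1)}` have tail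
`P(M_k > x) = 1 - exp(-p ((x+k^γ)/c)^{-α})`.  If `αγ > 1` then
`sup_{i ≥ 1} (c x_i - t_i^γ)` is almost surely finite. -/
theorem sup_points_minus_drift_as_finite
    (p c α γ : ℝ) (hp : 0 < p) (hc : 0 < c) (hα1 : 1 < α) (hα2 : α < 2)
    (hγ0 : 0 < γ) (hγ1 : γ < 1) (hαγ : 1 < α * γ)
    {Ω : Type*} [MeasurableSpace Ω] (P : Measure Ω) [IsProbabilityMeasure P]
    (t x : ℕ → Ω → ℝ)
    (ht : ∀ i ω, 0 ≤ t i ω) (hx : ∀ i ω, 0 < x i ω)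
    (hTail : ∀ (k : ℕ) (y : ℝ), 0 < y →
      P {ω | ∃ i, t i ω ∈ Set.Ico (k : ℝ) (k + 1) ∧ y < c * x i ω - (k : ℝ) ^ γ}
        = 1 - ENNReal.ofReal (Real.exp (-(p * (c / (y + (k : ℝ) ^ γ)) ^ α)))) :
    ∀ᵐ ω ∂P, BddAbove (Set.range fun i : ℕ => c * x i ω - (t i ω) ^ γ) :=
  sup_points_minus_drift_as_finite_general p c α γ hp hc hα1 hγ0 hαγ P t x ht hTail
end

section
/- With c_{n,i} = g_{[0,i)}·∫_{F^←(1/n)}^{F^←(1−1/n)} x dF(x), if the truncated mean is O(F_*^←(1−1/n)/n) and g_{[0,i)} is regularly varying of index γ < 1, then for any M > 0, max_{1 ≤ i ≤ Mn} c_{n,i}/F_*^←(1−1/n) → 0 as n → ∞. -/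
/-!
Since `I n = O(Fsq n / n)`, it suffices that `max_{i ≤ Mn} |G i| = o(n)`, which follows from a
Potter-type bound `G m = O(m ^ ρ)` with `γ < ρ < 1`. Comparing `G (2n)` with `2 ^ ρ G n` gives
this bound at the dyadic points `N 2 ^ j`; between them one needs `G j ≤ C G n` uniformly for
`j ∈ [n, 2n]`, i.e. the uniform convergence theorem for regular variation. For large `k` the set
of `l ∈ [1/2, 3]` with `G ⌊l n⌋ ≤ C G n` for all `n ≥ k` has almost full measure, and a counting
argument with disjoint windows writes every `j ∈ [n, 2n]` as `⌊l₂ ⌊l₁ n⌋⌋` with `l₁, l₂` in it.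
-/

open Filter Topology Asymptotics

/-- Regular variation for sequences. -/
def RegVarSeq (a : ℕ → ℝ) (ρ : ℝ) : Prop :=
  ∀ l : ℝ, 0 < l →
    Tendsto (fun n : ℕ => a ⌊l * (n : ℝ)⌋₊ / a n) atTop (𝓝 (l ^ ρ))

open MeasureTheory Set
open scoped ENNReal

section MeasureWindows

variable {α ι : Type*} [MeasurableSpace α] {μ : Measure α}

theorem card_mul_le_measure_of_pairwiseDisjoint {s : Finset ι} {W : ι → Set α} {B : Set α}
    {δ : ℝ≥0∞} (hWB : ∀ i ∈ s, W i ⊆ B) (hW : ∀ i ∈ s, MeasurableSet (W i))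
    (hd : (s : Set ι).PairwiseDisjoint W) (hδ : ∀ i ∈ s, δ ≤ μ (W i)) :
    s.card * δ ≤ μ B :=
  calc s.card * δ = ∑ _i ∈ s, δ := by rw [Finset.sum_const, nsmul_eq_mul]
    _ ≤ ∑ i ∈ s, μ (W i) := Finset.sum_le_sum hδ
    _ = μ (⋃ i ∈ s, W i) := (measure_biUnion_finset hd hW).symm
    _ ≤ μ B := measure_mono (iUnion₂_subset hWB)

theorem exists_inter_nonempty_of_two_mul_measure_diff_lt {s : Finset ι} {U V : ι → Set α}
    {J A : Set α} {δ : ℝ≥0∞} (hUJ : ∀ i ∈ s, U i ⊆ J) (hVJ : ∀ i ∈ s, V i ⊆ J)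
    (hU : ∀ i ∈ s, MeasurableSet (U i)) (hV : ∀ i ∈ s, MeasurableSet (V i))
    (hUd : (s : Set ι).PairwiseDisjoint U) (hVd : (s : Set ι).PairwiseDisjoint V)
    (hUδ : ∀ i ∈ s, δ ≤ μ (U i)) (hVδ : ∀ i ∈ s, δ ≤ μ (V i))
    (hA : 2 * μ (J \ A) < s.card * δ) :
    ∃ i ∈ s, (U i ∩ A).Nonempty ∧ (V i ∩ A).Nonempty := by
  classical
  by_contra! hbad
  set s₁ := s.filter fun i => (U i ∩ A).Nonempty
  set s₂ := s.filter fun i => ¬(U i ∩ A).Nonempty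
  have hs₁ : s₁ ⊆ s := Finset.filter_subset _ _
  have hs₂ : s₂ ⊆ s := Finset.filter_subset _ _
  have h₁ : s₁.card * δ ≤ μ (J \ A) := by
    refine card_mul_le_measure_of_pairwiseDisjoint (fun i hi x hx => ⟨hVJ i (hs₁ hi) hx, ?_⟩)
      (fun i hi => hV i (hs₁ hi)) (hVd.subset hs₁) (fun i hi => hVδ i (hs₁ hi))
    exact fun hxA => (hbad i (hs₁ hi) (Finset.mem_filter.1 hi).2).subset ⟨hx, hxA⟩
  have h₂ : s₂.card * δ ≤ μ (J \ A) :=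
    card_mul_le_measure_of_pairwiseDisjoint
      (fun i hi x hx => ⟨hUJ i (hs₂ hi) hx, fun hxA => (Finset.mem_filter.1 hi).2 ⟨x, hx, hxA⟩⟩)
      (fun i hi => hU i (hs₂ hi)) (hUd.subset hs₂) (fun i hi => hUδ i (hs₂ hi))
  have hcard : s.card * δ ≤ 2 * μ (J \ A) :=
    calc s.card * δ = s₁.card * δ + s₂.card * δ := by
          rw [← add_mul, ← Nat.cast_add, Finset.card_filter_add_card_filter_not]
      _ ≤ 2 * μ (J \ A) := by rw [two_mul]; exact add_le_add h₁ h₂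
  exact hA.not_ge hcard

theorem tendsto_measure_diff_setOf_forall_ge {J : Set α} {p : ℕ → α → Prop} (hJ : μ J ≠ ∞)
    (hJm : MeasurableSet J) (hp : ∀ n, MeasurableSet {x | p n x})
    (h : ∀ x ∈ J, ∀ᶠ n in atTop, p n x) :
    Tendsto (fun k => μ (J \ {x | ∀ n ≥ k, p n x})) atTop (𝓝 0) := by
  have hmeas : ∀ k, MeasurableSet (J \ {x | ∀ n ≥ k, p n x}) := fun k => by
    simp only [ofPred_forall]
    exact hJm.diff (MeasurableSet.iInter fun n => MeasurableSet.iInter fun _ => hp n)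
  have hanti : Antitone fun k => J \ {x | ∀ n ≥ k, p n x} :=
    fun k k' hk => sdiff_subset_sdiff_right fun x hx n hn => hx n (hk.trans hn)
  have hempty : ⋂ k, J \ {x | ∀ n ≥ k, p n x} = ∅ := by
    refine eq_empty_of_forall_notMem fun x hx => ?_
    obtain ⟨k, hk⟩ := eventually_atTop.1 (h x (mem_iInter.1 hx 0).1)
    exact (mem_iInter.1 hx k).2 hk
  have := tendsto_measure_iInter_atTop (μ := μ) (fun k => (hmeas k).nullMeasurableSet) hanti
    ⟨0, ne_top_of_le_ne_top hJ (measure_mono sdiff_subset)⟩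
  rwa [hempty, measure_empty] at this

end MeasureWindows

theorem mul_mem_Ico_of_mem_Ico_div {a b δ l : ℝ} (hb : 0 < b) (hl : l ∈ Ico (a / b) (a / b + δ)) :
    l * b ∈ Ico a (a + δ * b) := by
  obtain ⟨h₁, h₂⟩ := hl
  refine ⟨(div_le_iff₀ hb).1 h₁, ?_⟩
  calc l * b < (a / b + δ) * b := mul_lt_mul_of_pos_right h₂ hb
    _ = a + δ * b := by field_simp

theorem floor_mul_eq_of_mem_Ico_div {a : ℕ} {b δ l : ℝ} (hb : 0 < b) (hδ : δ * b ≤ 1)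
    (hl : l ∈ Ico (a / b) (a / b + δ)) : ⌊l * b⌋₊ = a := by
  obtain ⟨h₁, h₂⟩ := mul_mem_Ico_of_mem_Ico_div hb hl
  exact (Nat.floor_eq_iff ((Nat.cast_nonneg a).trans h₁)).2 ⟨h₁, by linarith⟩

theorem Ico_div_add_subset_Icc {a b : ℕ} {δ : ℝ} (hb : 0 < b) (hba : b ≤ 2 * a) (hab : a ≤ 2 * b)
    (hδ : δ ≤ 1) : Ico (a / b : ℝ) (a / b + δ) ⊆ Icc (1 / 2) 3 := by
  have hb' : (0 : ℝ) < b := by exact_mod_cast hb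
  have hba' : (b : ℝ) ≤ 2 * a := by exact_mod_cast hba
  have hab' : (a : ℝ) ≤ 2 * b := by exact_mod_cast hab
  refine Ico_subset_Icc_self.trans (Icc_subset_Icc ?_ ?_)
  · rw [le_div_iff₀ hb']; linarith
  · have : (a / b : ℝ) ≤ 2 := by rw [div_le_iff₀ hb']; linarith
    linarith

/-- Windows of length `δ ≤ 1 / (2m)` keep `l * m` within `1/2` of `T`; as `l > 1/2`, two distinct
`m` cannot share a point. -/
theorem pairwiseDisjoint_Ico_div_add {s : Set ℕ} {T δ : ℝ}
    (hs : ∀ m ∈ s, 0 < m ∧ (m : ℝ) < 2 * T ∧ 2 * δ * m ≤ 1) :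
    s.PairwiseDisjoint fun m : ℕ => Ico (T / m) (T / m + δ) := by
  have key : ∀ m ∈ s, ∀ m' ∈ s, m < m' →
      Disjoint (Ico (T / m) (T / m + δ)) (Ico (T / m' : ℝ) (T / m' + δ)) :=
    fun m hm m' hm' hlt => disjoint_left.2 fun l hl hl' => by
    obtain ⟨hm₀, -, -⟩ := hs m hm
    obtain ⟨hm₀', hm'T, hδm'⟩ := hs m' hm'
    obtain ⟨h₁, -⟩ := mul_mem_Ico_of_mem_Ico_div (by exact_mod_cast hm₀) hl
    obtain ⟨h₁', h₂'⟩ := mul_mem_Ico_of_mem_Ico_div (by exact_mod_cast hm₀') hl'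
    have : (m : ℝ) + 1 ≤ m' := by exact_mod_cast hlt
    nlinarith
  intro m hm m' hm' hne
  rcases hne.lt_or_gt with hlt | hlt
  exacts [key m hm m' hm' hlt, (key m' hm' m hm hlt).symm]

/-- A discrete form of Steinhaus' theorem. -/
theorem exists_floor_mul_eq_and_floor_mul_eq {A : Set ℝ} {n T : ℕ} (hn : 1 ≤ n) (hnT : n ≤ T)
    (hT : T ≤ 2 * n) (hA : 2 * volume (Icc (1 / 2 : ℝ) 3 \ A) < ENNReal.ofReal (1 / 4)) :
    ∃ m ≥ n, (∃ l ∈ A, ⌊l * n⌋₊ = m) ∧ (∃ l ∈ A, ⌊l * m⌋₊ = T) := by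
  have hn₀ : (0 : ℝ) < n := by exact_mod_cast hn
  set δ : ℝ := 1 / (4 * n) with hδ
  have hδn : n * δ = 1 / 4 := by rw [hδ]; field_simp
  have hmem : ∀ m ∈ Finset.Ico n (2 * n), n ≤ m ∧ m < 2 * n := fun m => Finset.mem_Ico.1
  have hδm : ∀ m ∈ Finset.Ico n (2 * n), 2 * δ * m ≤ 1 := fun m hm => by
    have : (m : ℝ) < 2 * n := by exact_mod_cast (hmem m hm).2
    nlinarith
  have hU : ∀ m ∈ Finset.Ico n (2 * n), ∀ l ∈ Ico (m / n : ℝ) (m / n + δ), ⌊l * n⌋₊ = m :=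
    fun m _ l hl => floor_mul_eq_of_mem_Ico_div hn₀ (by linarith) hl
  have hUd : (Finset.Ico n (2 * n) : Set ℕ).PairwiseDisjoint
      fun m : ℕ => Ico (m / n : ℝ) (m / n + δ) := fun m hm m' hm' hne =>
    disjoint_left.2 fun l hl hl' => hne ((hU m hm l hl).symm.trans (hU m' hm' l hl'))
  have hVd : (Finset.Ico n (2 * n) : Set ℕ).PairwiseDisjoint
      fun m : ℕ => Ico (T / m : ℝ) (T / m + δ) := pairwiseDisjoint_Ico_div_add fun m hm => by
    obtain ⟨hnm, hm2n⟩ := hmem m hm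
    exact ⟨by omega, by exact_mod_cast (by omega : m < 2 * T), hδm m hm⟩
  have hvol : ∀ a : ℝ, volume (Ico a (a + δ)) = ENNReal.ofReal δ := fun a => by
    rw [Real.volume_Ico, add_sub_cancel_left]
  have hcard : 2 * volume (Icc (1 / 2 : ℝ) 3 \ A) <
      (Finset.Ico n (2 * n)).card * ENNReal.ofReal δ := by
    rwa [Nat.card_Ico, show 2 * n - n = n by omega, ← ENNReal.ofReal_natCast,
      ← ENNReal.ofReal_mul (Nat.cast_nonneg n), hδn]
  have hδ₁ : δ ≤ 1 := by
    rw [hδ, div_le_one (by positivity)]; linarith [(Nat.one_le_cast (α := ℝ)).2 hn]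
  obtain ⟨m, hm, ⟨l₁, hl₁, hl₁A⟩, ⟨l₂, hl₂, hl₂A⟩⟩ :=
    exists_inter_nonempty_of_two_mul_measure_diff_lt
      (fun m hm => have := hmem m hm; Ico_div_add_subset_Icc (by omega) (by omega) (by omega) hδ₁)
      (fun m hm => have := hmem m hm; Ico_div_add_subset_Icc (by omega) (by omega) (by omega) hδ₁)
      (fun _ _ => measurableSet_Ico) (fun _ _ => measurableSet_Ico) hUd hVd
      (fun _ _ => (hvol _).ge) (fun _ _ => (hvol _).ge) hcard
  exact ⟨m, (hmem m hm).1, ⟨l₁, hl₁A, hU m hm l₁ hl₁⟩,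
    ⟨l₂, hl₂A, floor_mul_eq_of_mem_Ico_div (hn₀.trans_le (by exact_mod_cast (hmem m hm).1))
      (by linarith [hδm m hm]) hl₂⟩⟩

theorem eventually_exists_floor_mul_chain {P : ℕ → ℕ → Prop}
    (hP : ∀ l ∈ Icc (1 / 2 : ℝ) 3, ∀ᶠ n in atTop, P n ⌊l * n⌋₊) :
    ∀ᶠ n in atTop, ∀ T, n ≤ T → T ≤ 2 * n → ∃ m, P n m ∧ P m T := by
  have hmeas : ∀ n : ℕ, MeasurableSet {l : ℝ | P n ⌊l * n⌋₊} := fun n =>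
    (Nat.measurable_floor.comp (measurable_id.mul_const _)) MeasurableSet.of_discrete
  have htend := tendsto_measure_diff_setOf_forall_ge (μ := volume)
    (by rw [Real.volume_Icc]; exact ENNReal.ofReal_ne_top) measurableSet_Icc hmeas hP
  obtain ⟨k, hk⟩ := (htend.eventually_lt_const
    (ENNReal.ofReal_pos.2 (by norm_num : (0 : ℝ) < 1 / 8))).exists
  have hA : 2 * volume (Icc (1 / 2 : ℝ) 3 \ {l | ∀ n ≥ k, P n ⌊l * n⌋₊}) <
      ENNReal.ofReal (1 / 4) :=
    calc _ < 2 * ENNReal.ofReal (1 / 8) :=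
          ENNReal.mul_lt_mul_right two_ne_zero ENNReal.ofNat_ne_top hk
      _ = ENNReal.ofReal (1 / 4) := by
        rw [← ENNReal.ofReal_ofNat 2, ← ENNReal.ofReal_mul zero_le_two]; norm_num
  filter_upwards [eventually_ge_atTop (max k 1)] with n hn T hnT hT
  obtain ⟨m, hmn, ⟨l₁, hl₁, rfl⟩, ⟨l₂, hl₂, hl₂T⟩⟩ :=
    exists_floor_mul_eq_and_floor_mul_eq (by omega) hnT hT hA
  exact ⟨_, hl₁ n (by omega), hl₂T ▸ hl₂ _ (by omega)⟩

theorem RegVarSeq.exists_eventually_le_mul {G : ℕ → ℝ} {γ : ℝ} (hG : RegVarSeq G γ)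
    (hpos : ∀ᶠ n in atTop, 0 < G n) :
    ∃ C, 0 ≤ C ∧ ∀ᶠ n in atTop, ∀ j, n ≤ j → j ≤ 2 * n → G j ≤ C * G n := by
  obtain ⟨B, hB⟩ := (isCompact_Icc (a := (1 / 2 : ℝ)) (b := 3)).exists_bound_of_continuousOn
    (f := fun l : ℝ => l ^ γ) fun l hl =>
      (Real.continuousAt_rpow_const _ _ (Or.inl (by linarith [hl.1]))).continuousWithinAt
  have hB₀ : 0 ≤ B := (norm_nonneg _).trans (hB 1 ⟨by norm_num, by norm_num⟩)
  have hP : ∀ l ∈ Icc (1 / 2 : ℝ) 3, ∀ᶠ n : ℕ in atTop, G ⌊l * n⌋₊ ≤ (B + 1) * G n := fun l hl => by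
    have hlt : l ^ γ < B + 1 := ((Real.le_norm_self _).trans (hB l hl)).trans_lt (lt_add_one B)
    filter_upwards [(hG l (by linarith [hl.1])).eventually_lt_const hlt, hpos] with n hn hGn
    exact ((div_lt_iff₀ hGn).1 hn).le
  refine ⟨(B + 1) * (B + 1), by positivity,
    (eventually_exists_floor_mul_chain (P := fun n j => G j ≤ (B + 1) * G n) hP).mono
      fun n hn T hnT hT => ?_⟩
  obtain ⟨m, hmn, hTm⟩ := hn T hnT hT
  calc G T ≤ (B + 1) * G m := hTm
    _ ≤ (B + 1) * ((B + 1) * G n) := by gcongr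
    _ = (B + 1) * (B + 1) * G n := by ring

theorem exists_mul_two_pow_le_lt {N m : ℕ} (hN : 0 < N) (hNm : N ≤ m) :
    ∃ j, N * 2 ^ j ≤ m ∧ m < 2 * (N * 2 ^ j) := by
  have hq : m / N ≠ 0 := (Nat.div_pos hNm hN).ne'
  refine ⟨Nat.log 2 (m / N), ?_, ?_⟩
  · calc N * 2 ^ Nat.log 2 (m / N) ≤ N * (m / N) := Nat.mul_le_mul_left _ (Nat.pow_log_le_self 2 hq)
      _ ≤ m := Nat.mul_div_le m N
  · have := Nat.lt_pow_succ_log_self one_lt_two (m / N)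
    rw [Nat.div_lt_iff_lt_mul hN] at this
    calc m < 2 ^ (Nat.log 2 (m / N) + 1) * N := this
      _ = 2 * (N * 2 ^ Nat.log 2 (m / N)) := by ring

theorem RegVarSeq.isBigO_rpow {G : ℕ → ℝ} {γ ρ : ℝ} (hG : RegVarSeq G γ)
    (hpos : ∀ᶠ n in atTop, 0 < G n) (hγρ : γ < ρ) (hρ : 0 ≤ ρ) :
    G =O[atTop] fun m => (m : ℝ) ^ ρ := by
  obtain ⟨C, hC, hdoubling⟩ := hG.exists_eventually_le_mul hpos
  have htwo : ∀ᶠ n in atTop, G (2 * n) ≤ 2 ^ ρ * G n := by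
    filter_upwards [(hG 2 two_pos).eventually_lt_const
      (Real.rpow_lt_rpow_of_exponent_lt one_lt_two hγρ), hpos] with n hn hGn
    rw [show ⌊(2 : ℝ) * n⌋₊ = 2 * n by exact_mod_cast Nat.floor_natCast (2 * n)] at hn
    exact ((div_lt_iff₀ hGn).1 hn).le
  obtain ⟨N, hN⟩ := eventually_atTop.1
    (hdoubling.and (htwo.and (hpos.and (eventually_ge_atTop 1))))
  have hN₁ : 1 ≤ N := (hN N le_rfl).2.2.2
  have hNle : ∀ j, N ≤ N * 2 ^ j := fun j => Nat.le_mul_of_pos_right _ (by positivity)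
  have hdyadic : ∀ j : ℕ, G (N * 2 ^ j) ≤ (2 ^ ρ) ^ j * G N := by
    intro j
    induction j with
    | zero => simp
    | succ j ih =>
      calc G (N * 2 ^ (j + 1)) = G (2 * (N * 2 ^ j)) := by ring_nf
        _ ≤ 2 ^ ρ * G (N * 2 ^ j) := (hN _ (hNle j)).2.1
        _ ≤ 2 ^ ρ * ((2 ^ ρ) ^ j * G N) := by gcongr
        _ = (2 ^ ρ) ^ (j + 1) * G N := by ring
  have hGN : 0 < G N := (hN N le_rfl).2.2.1
  refine IsBigO.of_bound (C * G N) ?_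
  filter_upwards [eventually_ge_atTop N] with m hm
  obtain ⟨j, hjm, hmj⟩ := exists_mul_two_pow_le_lt hN₁ hm
  have hpow : ((2 : ℝ) ^ ρ) ^ j ≤ (m : ℝ) ^ ρ := by
    have h2j : 2 ^ j ≤ m := (Nat.le_mul_of_pos_left _ hN₁).trans hjm
    rw [Real.rpow_pow_comm zero_le_two]
    exact Real.rpow_le_rpow (by positivity) (by exact_mod_cast h2j) hρ
  rw [Real.norm_of_nonneg (hN m hm).2.2.1.le, Real.norm_of_nonneg (by positivity)]
  calc G m ≤ C * G (N * 2 ^ j) := (hN _ (hNle j)).1 m hjm hmj.le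
    _ ≤ C * ((2 ^ ρ) ^ j * G N) := by gcongr; exact hdyadic j
    _ ≤ C * ((m : ℝ) ^ ρ * G N) := by gcongr
    _ = C * G N * (m : ℝ) ^ ρ := by ring

theorem exists_forall_abs_le_mul_rpow {f : ℕ → ℝ} {ρ : ℝ}
    (hf : f =O[atTop] fun m => (m : ℝ) ^ ρ) :
    ∃ C, 0 ≤ C ∧ ∀ m, 1 ≤ m → |f m| ≤ C * (m : ℝ) ^ ρ := by
  have hshift : (fun k => f (k + 1)) =O[cofinite] fun k => ((k + 1 : ℕ) : ℝ) ^ ρ := by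
    rw [Nat.cofinite_eq_atTop]
    exact hf.comp_tendsto (tendsto_add_atTop_nat 1)
  obtain ⟨C, hC⟩ := (isBigO_cofinite_iff fun k hk =>
    absurd hk (Real.rpow_pos_of_pos (Nat.cast_pos.2 k.succ_pos) ρ).ne').1 hshift
  have hnorm : ∀ k : ℕ, ‖((k + 1 : ℕ) : ℝ) ^ ρ‖ = ((k + 1 : ℕ) : ℝ) ^ ρ := fun k =>
    Real.norm_of_nonneg (by positivity)
  refine ⟨C, ?_, fun m hm => ?_⟩
  · have h₀ := (norm_nonneg _).trans (hC 0)
    rwa [hnorm, zero_add, Nat.cast_one, Real.one_rpow, mul_one] at h₀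
  · obtain ⟨k, rfl⟩ := Nat.exists_eq_add_of_le' hm
    have hk := hC k
    rwa [hnorm, Real.norm_eq_abs] at hk

theorem abs_biSup_le {ι : Type*} {s : Finset ι} {f : ι → ℝ} {b : ℝ} (hb : 0 ≤ b)
    (h : ∀ i ∈ s, |f i| ≤ b) : |⨆ i ∈ s, f i| ≤ b := by
  have hle : ∀ i, ⨆ _ : i ∈ s, f i ≤ b := fun i =>
    Real.iSup_le (fun hi => (le_abs_self _).trans (h i hi)) hb
  refine abs_le.2 ⟨?_, Real.iSup_le hle hb⟩
  rcases s.eq_empty_or_nonempty with rfl | ⟨i, hi⟩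
  · simpa using hb
  · calc -b ≤ f i := neg_le_of_abs_le (h i hi)
      _ = ⨆ _ : i ∈ s, f i := (ciSup_pos (f := fun _ => f i) hi).symm
      _ ≤ ⨆ i ∈ s, f i := le_ciSup ⟨b, Set.forall_mem_range.2 hle⟩ i

theorem tendsto_rpow_mul_inv_natCast {ρ : ℝ} (hρ : ρ < 1) :
    Tendsto (fun n : ℕ => (n : ℝ) ^ ρ * (n : ℝ)⁻¹) atTop (𝓝 0) := by
  have h := (tendsto_rpow_neg_atTop (by linarith : 0 < 1 - ρ)).comp tendsto_natCast_atTop_atTop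
  refine h.congr' ((eventually_ne_atTop 0).mono fun n hn => ?_)
  rw [Function.comp_apply, neg_sub, Real.rpow_sub_one (Nat.cast_ne_zero.2 hn), div_eq_mul_inv]

theorem centering_negligible_general
    (γ : ℝ) (hγ1 : γ < 1)
    (G : ℕ → ℝ) (hG : RegVarSeq G γ) (hGpos : ∃ N, ∀ n ≥ N, 0 < G n)
    (Fsq : ℕ → ℝ) (hFsqpos : ∀ n, 0 < Fsq n)
    (I : ℕ → ℝ) (hI : I =O[atTop] (fun n : ℕ => Fsq n / n))
    (c : ℕ → ℕ → ℝ) (hc : ∀ n i, c n i = G i * I n) :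
    ∀ M : ℝ, 0 < M →
      Tendsto (fun n : ℕ => ⨆ i ∈ Finset.Icc 1 ⌊M * (n : ℝ)⌋₊, c n i / Fsq n)
        atTop (𝓝 0) := by
  intro M hM
  obtain ⟨ρ, hρ₀, hγρ, hρ₁⟩ : ∃ ρ : ℝ, 0 ≤ ρ ∧ γ < ρ ∧ ρ < 1 :=
    ⟨max 0 ((γ + 1) / 2), le_max_left _ _, by grind, by grind⟩
  obtain ⟨C, hC₀, hC⟩ := exists_forall_abs_le_mul_rpow
    (hG.isBigO_rpow (eventually_atTop.2 hGpos) hγρ hρ₀)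
  have hIF : (fun n => I n / Fsq n) =O[atTop] fun n : ℕ => (n : ℝ)⁻¹ := by
    refine (hI.mul (isBigO_refl (fun n => (Fsq n)⁻¹) atTop)).congr (fun n => rfl) fun n => ?_
    field_simp [(hFsqpos n).ne']
  have hbound : ∀ n : ℕ, ‖⨆ i ∈ Finset.Icc 1 ⌊M * (n : ℝ)⌋₊, c n i / Fsq n‖ ≤
      C * M ^ ρ * ‖(n : ℝ) ^ ρ * (I n / Fsq n)‖ := fun n => by
    refine abs_biSup_le (by positivity) fun i hi => ?_
    obtain ⟨hi₁, hiM⟩ := Finset.mem_Icc.1 hi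
    have hiM' : (i : ℝ) ≤ M * n := (Nat.cast_le.2 hiM).trans (Nat.floor_le (by positivity))
    have hGi : |G i| ≤ C * (M ^ ρ * (n : ℝ) ^ ρ) := by
      rw [← Real.mul_rpow hM.le (Nat.cast_nonneg n)]
      exact (hC i hi₁).trans (by gcongr)
    rw [hc, mul_div_assoc, abs_mul, Real.norm_eq_abs, abs_mul,
      abs_of_nonneg (by positivity : (0 : ℝ) ≤ (n : ℝ) ^ ρ)]
    calc |G i| * |I n / Fsq n| ≤ C * (M ^ ρ * (n : ℝ) ^ ρ) * |I n / Fsq n| := by gcongr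
      _ = C * M ^ ρ * ((n : ℝ) ^ ρ * |I n / Fsq n|) := by ring
  have hsmall : Tendsto (fun n : ℕ => (n : ℝ) ^ ρ * (I n / Fsq n)) atTop (𝓝 0) :=
    ((isBigO_refl _ _).mul hIF).trans_tendsto (tendsto_rpow_mul_inv_natCast hρ₁)
  exact squeeze_zero_norm hbound (by simpa using hsmall.norm.const_mul (C * M ^ ρ))

/-- With `c_{n,i} = g_{[0,i)} I_n` where `I_n` (the truncated mean) is
`O(F_*^←(1-1/n)/n)` and `g_{[0,·)}` is regularly varying of index `γ < 1`, for any
`M > 0` one has `max_{1 ≤ i ≤ Mn} c_{n,i}/F_*^←(1-1/n) → 0` as `n → ∞`. -/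
theorem centering_negligible
    (α γ : ℝ) (hα1 : 1 < α) (hα2 : α < 2) (hγ0 : 0 < γ) (hγ1 : γ < 1)
    (G : ℕ → ℝ) (hG : RegVarSeq G γ) (hGpos : ∃ N, ∀ n ≥ N, 0 < G n)
    (Fsq : ℕ → ℝ) (hFsq : RegVarSeq Fsq (1 / α)) (hFsqpos : ∀ n, 0 < Fsq n)
    (I : ℕ → ℝ) (hI : I =O[atTop] (fun n : ℕ => Fsq n / n))
    (c : ℕ → ℕ → ℝ) (hc : ∀ n i, c n i = G i * I n) :
    ∀ M : ℝ, 0 < M →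
      Tendsto (fun n : ℕ => ⨆ i ∈ Finset.Icc 1 ⌊M * (n : ℝ)⌋₊, c n i / Fsq n)
        atTop (𝓝 0) :=
  centering_negligible_general γ hγ1 G hG hGpos Fsq hFsqpos I hI c hc
end
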